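/- Let k ≥ 0 be an integer, let T be a (2k+1)-strong tournament, and let x, y be distinct vertices of T such that there is no directed path of length 2 from x to y and no directed path of length 2 from y to x. Then there exist at least 2k+1 internally disjoint directed paths of length 3 between x and y (each directed from x to y or from y to x). -/

import Mathlib

variable {V : Type*}

/-- A tournament relation: irreflexive, and between any two distinct vertices
exactly one of the two possible arcs is present. -/
def IsTournament (r : V → V → Prop) : Prop :=
  (∀ v : V, ¬ r v v) ∧ ∀ u v : V, u ≠ v → (r u v ↔ ¬ r v u)

/-- Strong connectivity: every vertex reaches every other by a directed walk. -/
def StronglyConnected (r : V → V → Prop) : Prop :=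
  ∀ u v : V, Relation.ReflTransGen r u v

/-- `k`-strong: at least `k+1` vertices, and deleting any set of fewer than `k`
vertices leaves a strongly connected digraph. -/
def KStrong [Fintype V] (r : V → V → Prop) (k : ℕ) : Prop :=
  k + 1 ≤ Fintype.card V ∧
    ∀ S : Set V, S.ncard < k → ∀ u v : V, u ∉ S → v ∉ S →
      Relation.ReflTransGen (fun a b => a ∉ S ∧ b ∉ S ∧ r a b) u v

/-- A directed path from `u` to `v`, recorded as its (nodup) list of vertices. -/
def IsDipath (r : V → V → Prop) (u v : V) (p : List V) : Prop :=
  p.Chain' r ∧ p.Nodup ∧ p.head? = some u ∧ p.getLast? = some v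

/-- A Hamiltonian directed path from `u` to `v`: a directed path containing
every vertex. -/
def IsHamDipath (r : V → V → Prop) (u v : V) (p : List V) : Prop :=
  IsDipath r u v p ∧ ∀ w : V, w ∈ p

/-- A family of paths between `x` and `y` is internally disjoint if two distinct
paths share no vertex other than `x` and `y`. -/
def InternallyDisjoint (x y : V) {k : ℕ} (ps : Fin k → List V) : Prop :=
  ∀ i j : Fin k, i ≠ j → ∀ w : V, w ∈ ps i → w ∈ ps j → w = x ∨ w = y

/-- A strong `k*`-container between `x` and `y`: `k` internally disjoint directed
paths, all from `x` to `y` or all from `y` to `x`, whose union contains every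
vertex. -/
def StrongStarContainer (r : V → V → Prop) (x y : V) (k : ℕ) : Prop :=
  ∃ ps : Fin k → List V, Function.Injective ps ∧
    ((∀ i, IsDipath r x y (ps i)) ∨ (∀ i, IsDipath r y x (ps i))) ∧
    InternallyDisjoint x y ps ∧ (∀ w : V, ∃ i, w ∈ ps i)

/-- A weak `k*`-container between `x` and `y`: `k` internally disjoint directed
paths, each from `x` to `y` or from `y` to `x`, whose union contains every
vertex. -/
def WeakStarContainer (r : V → V → Prop) (x y : V) (k : ℕ) : Prop :=
  ∃ ps : Fin k → List V, Function.Injective ps ∧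
    (∀ i, IsDipath r x y (ps i) ∨ IsDipath r y x (ps i)) ∧
    InternallyDisjoint x y ps ∧ (∀ w : V, ∃ i, w ∈ ps i)

/-- The irregularity of the digraph is at most `k`:
`|d⁺(x) − d⁻(x)| ≤ k` for every vertex `x`. -/
def IrregularityLE (r : V → V → Prop) (k : ℕ) : Prop :=
  ∀ x : V, ((({y : V | r x y}.ncard : ℤ) - ({y : V | r y x}.ncard : ℤ)).natAbs) ≤ k

/-!
Say `x → y`. As there is no path `y → w → x`, every in-neighbour `b` of `x` satisfies `b → y`,
so `x a b y` is a path of length 3 for every arc `a → b` from `A = N⁺(x) \ {y}` to `B = N⁻(x)`,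
and vertex-disjoint such arcs give internally disjoint paths. By Kőnig's theorem it suffices that
no set `S` of at most `2k` vertices meets every `A`–`B` arc. For such an `S`, a walk from `x` in
`T - S` could never leave `N⁺(x) ∪ {x}`, whereas `y` reaches `x` in `T - S` through an
in-neighbour of `x`; this contradicts strong connectivity of `T - S`.
-/

open Finset Function

theorem Finset.exists_matching_of_card_le_biUnion_card_add {ι α : Type*} [Fintype ι]
    [DecidableEq α] (t : ι → Finset α) {n d : ℕ} (hcard : n + d ≤ Fintype.card ι)
    (hall : ∀ s : Finset ι, #s ≤ #(s.biUnion t) + d) :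
    ∃ e : Fin n → ι, ∃ f : Fin n → α, Injective e ∧ Injective f ∧ ∀ j, f j ∈ t (e j) := by
  classical
  -- Hall's theorem applies once every `t i` is padded with the same `d` dummy elements.
  obtain ⟨F, hFinj, hFt⟩ := (all_card_le_biUnion_card_iff_exists_injective
    fun i => (t i).disjSum (univ : Finset (Fin d))).mp fun s => by
      rcases s.eq_empty_or_nonempty with rfl | ⟨i₀, hi₀⟩
      · simp
      calc #s ≤ #(s.biUnion t) + d := hall s
        _ = #((s.biUnion t).disjSum (univ : Finset (Fin d))) := by simp
        _ ≤ _ := card_le_card fun z hz => by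
          rcases z with a | j
          · simpa using hz
          · exact mem_biUnion.mpr ⟨i₀, hi₀, by simp⟩
  have hdummy : #{i | ¬ (F i).isLeft} ≤ d := by
    calc _ ≤ #((univ : Finset (Fin d)).image Sum.inr : Finset (α ⊕ Fin d)) :=
          card_le_card_of_injOn F (fun i hi => by
            obtain ⟨j, hj⟩ := Sum.isRight_iff.mp (Sum.not_isLeft.mp (mem_filter.mp hi).2)
            simp [hj]) hFinj.injOn
      _ ≤ d := card_image_le.trans (by simp)
  have hL : n ≤ #{i | (F i).isLeft} := by
    have := card_filter_add_card_filter_not (s := (univ : Finset ι)) fun i => (F i).isLeft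
    rw [card_univ] at this
    omega
  obtain ⟨M, hML, hM⟩ := exists_subset_card_eq hL
  set e : Fin n → ι := fun j => (M.equivFinOfCardEq hM).symm j
  have he : Injective e := Subtype.val_injective.comp (Equiv.injective _)
  have hleft : ∀ j, ∃ a, F (e j) = Sum.inl a := fun j =>
    Sum.isLeft_iff.mp (mem_filter.mp (hML ((M.equivFinOfCardEq hM).symm j).2)).2
  choose f hf using hleft
  refine ⟨e, f, he, fun i j hij => he (hFinj (by rw [hf, hf, hij])), fun j => ?_⟩
  simpa [hf] using hFt (e j)

theorem Finset.exists_matching_or_exists_cover {α β : Type*} (R : α → β → Prop)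
    (A : Finset α) (B : Finset β) (n : ℕ) :
    (∃ f : Fin n → α, ∃ g : Fin n → β, Injective f ∧ Injective g ∧
      ∀ i, f i ∈ A ∧ g i ∈ B ∧ R (f i) (g i)) ∨
    ∃ SA ⊆ A, ∃ SB ⊆ B, #SA + #SB < n ∧ ∀ a ∈ A, ∀ b ∈ B, R a b → a ∈ SA ∨ b ∈ SB := by
  classical
  by_cases hA : #A < n
  · exact Or.inr ⟨A, subset_rfl, ∅, empty_subset _, by simpa, fun a ha _ _ _ => Or.inl ha⟩
  let N : Finset α → Finset β := fun s => {b ∈ B | ∃ a ∈ s, R a b}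
  -- Either some `s ⊆ A` has deficiency `#s - #(N s)` above `#A - n`, and `(A \ s, N s)` is a
  -- small cover, or Hall's condition holds up to that deficiency.
  by_cases hdef : ∃ s ⊆ A, #(N s) + (#A - n) < #s
  · obtain ⟨s, hsA, hs⟩ := hdef
    refine Or.inr ⟨A \ s, sdiff_subset, N s, filter_subset _ _, ?_, fun a ha b hb hab => ?_⟩
    · rw [card_sdiff_of_subset hsA]
      have := card_le_card hsA
      omega
    · by_cases has : a ∈ s
      · exact Or.inr (mem_filter.mpr ⟨hb, a, has, hab⟩)
      · exact Or.inl (mem_sdiff.mpr ⟨ha, has⟩)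
  push Not at hdef
  obtain ⟨e, g, he, hg, hmem⟩ := exists_matching_of_card_le_biUnion_card_add
    (fun a : A => {b ∈ B | R a b}) (n := n) (d := #A - n) (by simp; omega) fun s => by
      have hN : N (s.map (Embedding.subtype _)) = s.biUnion fun a => {b ∈ B | R a b} := by
        ext b
        simp only [N, mem_filter, mem_map, mem_biUnion, Embedding.coe_subtype]
        aesop
      simpa [hN] using hdef (s.map (Embedding.subtype _)) (by exact_mod_cast map_subtype_subset s)
  exact Or.inl ⟨fun i => e i, g, Subtype.val_injective.comp he, hg, fun i => by
    simpa using hmem i⟩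

theorem InternallyDisjoint.symm {k : ℕ} {x y : V} {ps : Fin k → List V}
    (h : InternallyDisjoint x y ps) : InternallyDisjoint y x ps :=
  fun i j hij w hi hj => (h i j hij w hi hj).symm

theorem internallyDisjoint_of_injective {k : ℕ} {x y : V} {a b : Fin k → V} (ha : Injective a)
    (hb : Injective b) (hab : ∀ i j, a i ≠ b j) :
    InternallyDisjoint x y fun i => [x, a i, b i, y] := by
  intro i j hij w hwi hwj
  simp only [List.mem_cons, List.not_mem_nil, or_false] at hwi hwj
  rcases hwi with rfl | rfl | rfl | rfl <;> rcases hwj with h | h | h | h <;>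
    simp_all [ha.eq_iff, hb.eq_iff, (hab _ _).symm]

namespace IsTournament

variable {r : V → V → Prop}

theorem ne_of_rel (hT : IsTournament r) {u v : V} (h : r u v) : u ≠ v :=
  fun huv => hT.1 u (huv ▸ h)

theorem not_rel_of_rel (hT : IsTournament r) {u v : V} (h : r u v) : ¬ r v u :=
  (hT.2 u v (hT.ne_of_rel h)).mp h

theorem rel_of_not_rel (hT : IsTournament r) {u v : V} (huv : u ≠ v) (h : ¬ r u v) : r v u :=
  (hT.2 v u huv.symm).mpr h

variable {x y : V}

theorem rel_of_rel_of_no_twoPath (hT : IsTournament r) (hyx2 : ¬ ∃ w, r y w ∧ r w x) {v : V}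
    (hv : v ≠ x) (hyv : r y v) : r x v :=
  hT.rel_of_not_rel hv fun hvx => hyx2 ⟨v, hyv, hvx⟩

theorem eq_or_rel_of_reflTransGen (hT : IsTournament r) (hyx2 : ¬ ∃ w, r y w ∧ r w x)
    {S : Set V} (hcov : ∀ a b, r x a → a ≠ y → r b x → r a b → a ∈ S ∨ b ∈ S) {v : V}
    (hv : Relation.ReflTransGen (fun a b => a ∉ S ∧ b ∉ S ∧ r a b) x v) : v = x ∨ r x v := by
  induction hv with
  | refl => exact Or.inl rfl
  | @tail c v _ hcv ih =>
    obtain ⟨hcS, hvS, hcv⟩ := hcv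
    by_cases hvx : v = x
    · exact Or.inl hvx
    refine Or.inr ?_
    rcases ih with rfl | hxc
    · exact hcv
    by_cases hcy : c = y
    · exact hT.rel_of_rel_of_no_twoPath hyx2 hvx (hcy ▸ hcv)
    by_contra hxv
    rcases hcov c v hxc hcy (hT.rel_of_not_rel (Ne.symm hvx) hxv) hcv with h | h
    exacts [hcS h, hvS h]

theorem not_forall_cover (hT : IsTournament r) (hrxy : r x y)
    (hyx2 : ¬ ∃ w, r y w ∧ r w x) {S : Set V} (hx : x ∉ S) (hy : y ∉ S)
    (hS : ∀ u v, u ∉ S → v ∉ S → Relation.ReflTransGen (fun a b => a ∉ S ∧ b ∉ S ∧ r a b) u v) :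
    ¬ ∀ a b, r x a → a ≠ y → r b x → r a b → a ∈ S ∨ b ∈ S := by
  intro hcov
  obtain ⟨c, -, hcS, -, hcx⟩ :=
    (Relation.ReflTransGen.cases_tail (hS y x hy hx)).resolve_left (hT.ne_of_rel hrxy)
  rcases hT.eq_or_rel_of_reflTransGen hyx2 hcov (hS x c hx hcS) with rfl | hxc
  exacts [hT.1 _ hcx, hT.not_rel_of_rel hxc hcx]

theorem exists_matching_of_kStrong [Fintype V] (hT : IsTournament r) {k : ℕ}
    (hstrong : KStrong r k) (hrxy : r x y) (hyx2 : ¬ ∃ w, r y w ∧ r w x) :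
    ∃ a b : Fin k → V, Injective a ∧ Injective b ∧
      ∀ i, (r x (a i) ∧ a i ≠ y) ∧ r (b i) x ∧ r (a i) (b i) := by
  classical
  refine (exists_matching_or_exists_cover r {a | r x a ∧ a ≠ y} {b | r b x} k).elim
    (fun ⟨a, b, ha, hb, hab⟩ => ⟨a, b, ha, hb, fun i => by simpa using hab i⟩) ?_
  rintro ⟨SA, hSA, SB, hSB, hcard, hcov⟩
  have hx : x ∉ SA ∪ SB := by
    rw [mem_union, not_or]
    exact ⟨fun h => by simpa [hT.1 x] using hSA h, fun h => by simpa [hT.1 x] using hSB h⟩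
  have hy : y ∉ SA ∪ SB := by
    rw [mem_union, not_or]
    exact ⟨fun h => by simpa using hSA h, fun h => hT.not_rel_of_rel hrxy (by simpa using hSB h)⟩
  refine (hT.not_forall_cover hrxy hyx2 (S := ↑(SA ∪ SB)) (by exact_mod_cast hx)
    (by exact_mod_cast hy) (hstrong.2 _ ?_) fun a b hxa hay hbx hab => ?_).elim
  · rw [Set.ncard_coe_finset]
    exact (card_union_le _ _).trans_lt hcard
  · exact (hcov a (by simp [hxa, hay]) b (by simp [hbx]) hab).imp (mem_union_left _)
      (mem_union_right _)

theorem exists_internallyDisjoint_paths [Fintype V] (hT : IsTournament r) {k : ℕ}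
    (hstrong : KStrong r k) (hrxy : r x y) (hyx2 : ¬ ∃ w, r y w ∧ r w x) :
    ∃ ps : Fin k → List V, Injective ps ∧
      (∀ i, IsDipath r x y (ps i) ∧ (ps i).length = 4) ∧ InternallyDisjoint x y ps := by
  obtain ⟨a, b, ha, hb, hab⟩ := hT.exists_matching_of_kStrong hstrong hrxy hyx2
  have hab_ne : ∀ i j, a i ≠ b j := fun i j h => hT.not_rel_of_rel (hab i).1.1 (h ▸ (hab j).2.1)
  have hb_ne : ∀ i, b i ≠ y := fun i h => hT.not_rel_of_rel hrxy (h ▸ (hab i).2.1)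
  refine ⟨fun i => [x, a i, b i, y], fun i j h => ha (List.cons.inj (List.cons.inj h).2).1,
    fun i => ⟨⟨?_, ?_, rfl, rfl⟩, rfl⟩, internallyDisjoint_of_injective ha hb hab_ne⟩
  · have hby : r (b i) y :=
      hT.rel_of_not_rel (hb_ne i).symm fun hyb => hyx2 ⟨b i, hyb, (hab i).2.1⟩
    show List.IsChain r _
    simp [(hab i).1.1, (hab i).2.2, hby]
  · simp [hT.ne_of_rel (hab i).1.1, (hT.ne_of_rel (hab i).2.1).symm, hT.ne_of_rel (hab i).2.2,
      hT.ne_of_rel hrxy, (hab i).1.2, hb_ne i]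

end IsTournament

/-- In a `(2k+1)`-strong tournament, if two distinct vertices
`x, y` admit no directed path of length 2 in either direction, then there are at
least `2k+1` internally disjoint directed paths of length 3 between them. -/
theorem stmt14 [Fintype V] (r : V → V → Prop) (hT : IsTournament r)
    (k : ℕ) (hstrong : KStrong r (2 * k + 1)) (x y : V) (hxy : x ≠ y)
    (hxy2 : ¬ ∃ w : V, r x w ∧ r w y) (hyx2 : ¬ ∃ w : V, r y w ∧ r w x) :
    ∃ ps : Fin (2 * k + 1) → List V, Function.Injective ps ∧
      (∀ i, (IsDipath r x y (ps i) ∨ IsDipath r y x (ps i)) ∧ (ps i).length = 4) ∧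
      InternallyDisjoint x y ps := by
  by_cases hrxy : r x y
  · obtain ⟨ps, hinj, hps, hdisj⟩ := hT.exists_internallyDisjoint_paths hstrong hrxy hyx2
    exact ⟨ps, hinj, fun i => ⟨Or.inl (hps i).1, (hps i).2⟩, hdisj⟩
  · obtain ⟨ps, hinj, hps, hdisj⟩ :=
      hT.exists_internallyDisjoint_paths hstrong (hT.rel_of_not_rel hxy hrxy) hxy2
    exact ⟨ps, hinj, fun i => ⟨Or.inr (hps i).1, (hps i).2⟩, hdisj.symm⟩
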